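/- (Deterministic iteration invariant for the approximate step.) Let 𝒜 : ℝ^{m×n} → ℝ^p be a linear map satisfying the R-RIP at rank r+ℓ with constant δ₁ ∈ (0,1) and at rank 2r with constant δ₂ ∈ (0,1), where ℓ ≥ r, and suppose ‖𝒜‖² ≤ mn/p, where ‖𝒜‖ is the operator norm from (ℝ^{m×n}, ‖·‖_F) to (ℝ^p, ‖·‖₂). Suppose y = 𝒜(X★) + e with rank(X★) ≤ r. Let C > 0, let X_i ∈ ℝ^{m×n} have rank(X_i) ≤ r with f(X_i) > C²‖e‖₂², set μ = 1/(2(1+δ₁)), and let ϵ ≥ 0 and X̃ ∈ ℝ^{m×n} with rank(X̃) ≤ ℓ satisfy ‖X̃ − (X_i − μ∇f(X_i))‖_F² ≤ (1+ϵ)·‖X★ − (X_i − μ∇f(X_i))‖_F². Then f(X̃) ≤ θ'·f(X_i) + τ'·‖e‖₂², where θ' = (ϵ/(1+δ₁))·(mn/p) + (1+ϵ)·((δ₁+δ₂)/(1−δ₂))·(1+2/C) and τ' = (1+ϵ)·(1 + (δ₁+δ₂)/(1−δ₂)). -/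
import Mathlib


open scoped BigOperators

/-- Squared Frobenius norm of a real matrix. -/
noncomputable def frobSq {m n : ℕ} (X : Matrix (Fin m) (Fin n) ℝ) : ℝ :=
  ∑ i, ∑ j, (X i j) ^ 2

/-- Frobenius norm of a real matrix. -/
noncomputable def frobNorm {m n : ℕ} (X : Matrix (Fin m) (Fin n) ℝ) : ℝ :=
  Real.sqrt (frobSq X)

/-- Frobenius inner product `⟨X, Y⟩ = tr(Xᵀ Y)`. -/
noncomputable def frobInner {m n : ℕ} (X Y : Matrix (Fin m) (Fin n) ℝ) : ℝ :=
  ∑ i, ∑ j, X i j * Y i j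

/-- Squared Euclidean norm on `ℝ^p`. -/
noncomputable def vecNormSq {p : ℕ} (v : Fin p → ℝ) : ℝ := ∑ i, (v i) ^ 2

/-- Euclidean norm on `ℝ^p`. -/
noncomputable def vecNorm {p : ℕ} (v : Fin p → ℝ) : ℝ := Real.sqrt (vecNormSq v)

/-- Euclidean inner product on `ℝ^p`. -/
noncomputable def dotp {p : ℕ} (v w : Fin p → ℝ) : ℝ := ∑ i, v i * w i

/-- Rank restricted isometry property (R-RIP) at rank `s` with constant `δ`. -/
def RIP {m n p : ℕ} (A : Matrix (Fin m) (Fin n) ℝ →ₗ[ℝ] (Fin p → ℝ)) (s : ℕ) (δ : ℝ) : Prop :=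
  ∀ X : Matrix (Fin m) (Fin n) ℝ, X.rank ≤ s →
    (1 - δ) * frobSq X ≤ vecNormSq (A X) ∧ vecNormSq (A X) ≤ (1 + δ) * frobSq X

/-- The data error `f(X) = ‖y - 𝒜 X‖₂²`. -/
noncomputable def dataErr {m n p : ℕ} (A : Matrix (Fin m) (Fin n) ℝ →ₗ[ℝ] (Fin p → ℝ))
    (y : Fin p → ℝ) (X : Matrix (Fin m) (Fin n) ℝ) : ℝ :=
  vecNormSq (y - A X)

/-- `Aadj` is the adjoint of `A` with respect to the Frobenius and Euclidean inner products. -/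
def IsAdjoint {m n p : ℕ} (A : Matrix (Fin m) (Fin n) ℝ →ₗ[ℝ] (Fin p → ℝ))
    (Aadj : (Fin p → ℝ) →ₗ[ℝ] Matrix (Fin m) (Fin n) ℝ) : Prop :=
  ∀ (z : Fin p → ℝ) (X : Matrix (Fin m) (Fin n) ℝ), frobInner (Aadj z) X = dotp z (A X)

/-- The gradient `∇f(X) = 2 𝒜*(𝒜 X - y)` of the data error. -/
noncomputable def gradErr {m n p : ℕ} (A : Matrix (Fin m) (Fin n) ℝ →ₗ[ℝ] (Fin p → ℝ))
    (Aadj : (Fin p → ℝ) →ₗ[ℝ] Matrix (Fin m) (Fin n) ℝ) (y : Fin p → ℝ)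
    (X : Matrix (Fin m) (Fin n) ℝ) : Matrix (Fin m) (Fin n) ℝ :=
  (2 : ℝ) • Aadj (A X - y)

section AuxLemmas

variable {m n p : ℕ}

lemma dotp_self' (v : Fin p → ℝ) : dotp v v = vecNormSq v := by
  simp [dotp, vecNormSq, sq]

lemma vecNormSq_nonneg' (v : Fin p → ℝ) : 0 ≤ vecNormSq v :=
  Finset.sum_nonneg fun _ _ => sq_nonneg _

lemma dotp_comm' (v w : Fin p → ℝ) : dotp v w = dotp w v := by
  simp [dotp, mul_comm]

lemma dotp_sub_left' (v w u : Fin p → ℝ) : dotp (v - w) u = dotp v u - dotp w u := by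
  simp [dotp, sub_mul, Finset.sum_sub_distrib]

lemma dotp_sub_right' (v w u : Fin p → ℝ) : dotp v (w - u) = dotp v w - dotp v u := by
  simp [dotp, mul_sub, Finset.sum_sub_distrib]

lemma vecNormSq_sub' (v w : Fin p → ℝ) :
    vecNormSq (v - w) = vecNormSq v - 2 * dotp v w + vecNormSq w := by
  rw [← dotp_self', dotp_sub_left', dotp_sub_right', dotp_sub_right', dotp_self', dotp_self',
    dotp_comm' w v]; ring

lemma dotp_sq_le' (v w : Fin p → ℝ) : (dotp v w) ^ 2 ≤ vecNormSq v * vecNormSq w :=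
  Finset.sum_mul_sq_le_sq_mul_sq _ _ _

lemma frobInner_self' (X : Matrix (Fin m) (Fin n) ℝ) : frobInner X X = frobSq X := by
  simp [frobInner, frobSq, sq]

lemma frobSq_nonneg' (X : Matrix (Fin m) (Fin n) ℝ) : 0 ≤ frobSq X :=
  Finset.sum_nonneg fun _ _ => Finset.sum_nonneg fun _ _ => sq_nonneg _

lemma frobInner_comm' (X Y : Matrix (Fin m) (Fin n) ℝ) : frobInner X Y = frobInner Y X := by
  simp [frobInner, mul_comm]

lemma frobInner_sub_left' (X Y Z : Matrix (Fin m) (Fin n) ℝ) :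
    frobInner (X - Y) Z = frobInner X Z - frobInner Y Z := by
  simp [frobInner, Matrix.sub_apply, sub_mul, Finset.sum_sub_distrib]

lemma frobInner_sub_right' (X Y Z : Matrix (Fin m) (Fin n) ℝ) :
    frobInner X (Y - Z) = frobInner X Y - frobInner X Z := by
  simp [frobInner, Matrix.sub_apply, mul_sub, Finset.sum_sub_distrib]

lemma frobInner_smul_right' (c : ℝ) (X Y : Matrix (Fin m) (Fin n) ℝ) :
    frobInner X (c • Y) = c * frobInner X Y := by
  simp only [frobInner, Matrix.smul_apply, smul_eq_mul, Finset.mul_sum]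
  exact Finset.sum_congr rfl fun i _ => Finset.sum_congr rfl fun j _ => by ring

lemma frobSq_sub' (X Y : Matrix (Fin m) (Fin n) ℝ) :
    frobSq (X - Y) = frobSq X - 2 * frobInner X Y + frobSq Y := by
  rw [← frobInner_self', frobInner_sub_left', frobInner_sub_right', frobInner_sub_right',
    frobInner_self', frobInner_self', frobInner_comm' Y X]; ring

lemma frobSq_smul' (c : ℝ) (X : Matrix (Fin m) (Fin n) ℝ) :
    frobSq (c • X) = c ^ 2 * frobSq X := by
  simp [frobSq, Matrix.smul_apply, smul_eq_mul, mul_pow, Finset.mul_sum]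

lemma matrix_rank_add_le' (X Y : Matrix (Fin m) (Fin n) ℝ) :
    (X + Y).rank ≤ X.rank + Y.rank := by
  unfold Matrix.rank
  rw [Matrix.mulVecLin_add]
  have hle : LinearMap.range (X.mulVecLin + Y.mulVecLin) ≤
      LinearMap.range X.mulVecLin ⊔ LinearMap.range Y.mulVecLin := by
    rintro _ ⟨v, rfl⟩
    exact Submodule.add_mem_sup ⟨v, rfl⟩ ⟨v, rfl⟩
  exact (Submodule.finrank_mono hle).trans
    (Submodule.finrank_add_le_finrank_add_finrank _ _)

lemma matrix_rank_neg' (X : Matrix (Fin m) (Fin n) ℝ) : (-X).rank = X.rank := by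
  have h : (-X).mulVecLin = -(X.mulVecLin) := by
    ext v i
    simp [Matrix.mulVecLin_apply, Matrix.neg_mulVec, LinearMap.neg_apply, Pi.neg_apply]
  unfold Matrix.rank
  rw [h, LinearMap.range_neg]

lemma matrix_rank_sub_le' (X Y : Matrix (Fin m) (Fin n) ℝ) :
    (X - Y).rank ≤ X.rank + Y.rank := by
  rw [sub_eq_add_neg]
  exact (matrix_rank_add_le' X (-Y)).trans (by rw [matrix_rank_neg' Y])

end AuxLemmas

/-- Deterministic iteration invariant for the approximate step.
Under the R-RIP at ranks `r+ℓ` (constant `δ₁`) and `2r` (constant `δ₂`), `ℓ ≥ r`,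
`‖𝒜‖² ≤ mn/p`, `y = 𝒜 X★ + e` with `rank X★ ≤ r`, `rank X_i ≤ r`,
`f(X_i) > C²‖e‖₂²`, `μ = 1/(2(1+δ₁))` and an `(1+ϵ)`-approximate projection `X̃` of
`X_i - μ∇f(X_i)` with `rank X̃ ≤ ℓ`, one has `f(X̃) ≤ θ'·f(X_i) + τ'·‖e‖₂²` with
`θ' = (ϵ/(1+δ₁))(mn/p) + (1+ϵ)((δ₁+δ₂)/(1-δ₂))(1+2/C)` and
`τ' = (1+ϵ)(1 + (δ₁+δ₂)/(1-δ₂))`. -/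
theorem stmt10 {m n p : ℕ} (hp : 0 < p)
    (A : Matrix (Fin m) (Fin n) ℝ →ₗ[ℝ] (Fin p → ℝ))
    (Aadj : (Fin p → ℝ) →ₗ[ℝ] Matrix (Fin m) (Fin n) ℝ) (hAdj : IsAdjoint A Aadj)
    (r ℓ : ℕ) (hℓ : r ≤ ℓ)
    (δ₁ δ₂ : ℝ) (hδ₁0 : 0 < δ₁) (hδ₁1 : δ₁ < 1) (hδ₂0 : 0 < δ₂) (hδ₂1 : δ₂ < 1)
    (hRIP1 : RIP A (r + ℓ) δ₁) (hRIP2 : RIP A (2 * r) δ₂)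
    (hnorm : ∀ Z : Matrix (Fin m) (Fin n) ℝ,
      vecNormSq (A Z) ≤ ((m : ℝ) * n / p) * frobSq Z)
    (Xstar : Matrix (Fin m) (Fin n) ℝ) (hXstar : Xstar.rank ≤ r)
    (e : Fin p → ℝ) (y : Fin p → ℝ) (hy : y = A Xstar + e)
    (C : ℝ) (hC : 0 < C)
    (Xi : Matrix (Fin m) (Fin n) ℝ) (hXi : Xi.rank ≤ r)
    (hfXi : dataErr A y Xi > C ^ 2 * vecNormSq e)
    (μ : ℝ) (hμ : μ = 1 / (2 * (1 + δ₁)))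
    (ε : ℝ) (hε : 0 ≤ ε)
    (Xt : Matrix (Fin m) (Fin n) ℝ) (hXt : Xt.rank ≤ ℓ)
    (happrox : frobSq (Xt - (Xi - μ • gradErr A Aadj y Xi)) ≤
      (1 + ε) * frobSq (Xstar - (Xi - μ • gradErr A Aadj y Xi))) :
    dataErr A y Xt ≤
      ((ε / (1 + δ₁)) * ((m : ℝ) * n / p)
          + (1 + ε) * ((δ₁ + δ₂) / (1 - δ₂)) * (1 + 2 / C)) * dataErr A y Xi
        + ((1 + ε) * (1 + (δ₁ + δ₂) / (1 - δ₂))) * vecNormSq e := by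
  -- abbreviations
  set b : Fin p → ℝ := y - A Xi with hb
  set g : Matrix (Fin m) (Fin n) ℝ := Aadj b with hg
  set B : ℝ := vecNormSq b with hB
  set E : ℝ := vecNormSq e with hE
  set d : ℝ := dotp b e with hd
  set c : ℝ := (m : ℝ) * n / p with hc
  set s : ℝ := (δ₁ + δ₂) / (1 - δ₂) with hs
  set F : ℝ := frobSq g with hF
  set Dt : ℝ := frobSq (Xt - Xi) with hDt
  set Ds : ℝ := frobSq (Xstar - Xi) with hDs
  set It : ℝ := frobInner (Xt - Xi) g with hIt
  set Is : ℝ := frobInner (Xstar - Xi) g with hIs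
  clear_value b g B E d c s F Dt Ds It Is
  have h1δ : (0:ℝ) < 1 + δ₁ := by linarith
  have h2δ : (0:ℝ) < 1 - δ₂ := by linarith
  have hc0 : (0:ℝ) ≤ c := by rw [hc]; positivity
  have hs0 : (0:ℝ) ≤ s := by rw [hs]; positivity
  have hε1 : (0:ℝ) ≤ 1 + ε := by linarith
  have HB0 : 0 ≤ B := by rw [hB]; exact vecNormSq_nonneg' b
  have HE0 : 0 ≤ E := by rw [hE]; exact vecNormSq_nonneg' e
  have HF0 : 0 ≤ F := by rw [hF]; exact frobSq_nonneg' g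
  have e1 : (1 + δ₁) * (4 * μ) = 2 := by rw [hμ]; field_simp; try ring
  have e2 : (1 + δ₁) * (4 * μ ^ 2) = 1 / (1 + δ₁) := by rw [hμ]; field_simp; try ring
  have h_s_eq : 1 + δ₁ = (1 + s) * (1 - δ₂) := by rw [hs]; field_simp [h2δ.ne']; try ring
  -- dataErr at Xi
  have hfXiB : dataErr A y Xi = B := by simp only [dataErr]; rw [← hb, ← hB]
  rw [hfXiB] at hfXi
  have H9 : C ^ 2 * E < B := hfXi
  have hBpos : 0 < B := lt_of_le_of_lt (by positivity) H9
  -- the iterate point V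
  have hV : Xi - μ • gradErr A Aadj y Xi = Xi + (2 * μ) • g := by
    have hAXiy : A Xi - y = -b := by rw [hb]; abel
    rw [gradErr, hAXiy, map_neg, hg]
    module
  -- the quadratic expansion identity
  have key : ∀ X : Matrix (Fin m) (Fin n) ℝ,
      frobSq (X - (Xi + (2 * μ) • g)) =
        frobSq (X - Xi) - (4 * μ) * frobInner (X - Xi) g + (4 * μ ^ 2) * F := by
    intro X
    have hrw : X - (Xi + (2 * μ) • g) = (X - Xi) - (2 * μ) • g := by module
    rw [hrw, frobSq_sub', frobInner_smul_right', frobSq_smul', hF]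
    ring
  -- approximate projection inequality in scalar form
  have HA : Dt - 4 * μ * It + 4 * μ ^ 2 * F ≤ (1 + ε) * (Ds - 4 * μ * Is + 4 * μ ^ 2 * F) := by
    rw [hV] at happrox
    rw [key Xt, key Xstar] at happrox
    rw [hDt, hDs, hIt, hIs]
    linarith only [happrox]
  -- adjoint identities
  have hItd : It = dotp b (A (Xt - Xi)) := by
    rw [hIt, frobInner_comm', hg]; exact hAdj b _
  have hIsd : Is = dotp b (A (Xstar - Xi)) := by
    rw [hIs, frobInner_comm', hg]; exact hAdj b _
  -- RIP bounds
  have hrank1 : (Xt - Xi).rank ≤ r + ℓ := by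
    have := matrix_rank_sub_le' Xt Xi
    omega
  have hub : vecNormSq (A (Xt - Xi)) ≤ (1 + δ₁) * Dt := by
    rw [hDt]; exact (hRIP1 _ hrank1).2
  have hrank2 : (Xstar - Xi).rank ≤ 2 * r := by
    have := matrix_rank_sub_le' Xstar Xi
    omega
  have hlb : (1 - δ₂) * Ds ≤ vecNormSq (A (Xstar - Xi)) := by
    rw [hDs]; exact (hRIP2 _ hrank2).1
  -- A (Xstar - Xi) = b - e
  have hAe : A (Xstar - Xi) = b - e := by
    rw [map_sub, hb, hy]; abel
  have hvbe : vecNormSq (b - e) = B - 2 * d + E := by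
    rw [vecNormSq_sub', hB, hE, hd]
  have hIsBd : Is = B - d := by
    rw [hIsd, hAe, dotp_sub_right', dotp_self', hB, hd]
  -- dataErr at Xt
  have hyt : y - A Xt = b - A (Xt - Xi) := by
    rw [map_sub, hb]; abel
  have hfXt : dataErr A y Xt =
      B - 2 * dotp b (A (Xt - Xi)) + vecNormSq (A (Xt - Xi)) := by
    simp only [dataErr]
    rw [hyt, vecNormSq_sub', ← hB]
  -- step 1: RIP upper bound
  have H1' : dataErr A y Xt ≤ B + (1 + δ₁) * (Dt - 4 * μ * It) := by
    have heq : (1 + δ₁) * (Dt - 4 * μ * It) = (1 + δ₁) * Dt - 2 * It := by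
      linear_combination (-It) * e1
    rw [hfXt, heq, ← hItd]
    linarith only [hub]
  -- step 2: use the approximation
  have step2 : (1 + δ₁) * (Dt - 4 * μ * It) ≤
      (1 + δ₁) * ((1 + ε) * (Ds - 4 * μ * Is + 4 * μ ^ 2 * F) - 4 * μ ^ 2 * F) := by
    apply mul_le_mul_of_nonneg_left _ h1δ.le
    linarith only [HA]
  have step3 : (1 + δ₁) * ((1 + ε) * (Ds - 4 * μ * Is + 4 * μ ^ 2 * F) - 4 * μ ^ 2 * F) =
      (1 + ε) * ((1 + δ₁) * Ds - 2 * Is) + ε * (F / (1 + δ₁)) := by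
    linear_combination (1 + ε) * (-Is) * e1 + ε * F * e2
  -- bound for Ds via lower RIP
  have h5' : (1 - δ₂) * Ds ≤ B - 2 * d + E := by
    rw [← hvbe, ← hAe]; exact hlb
  have HK : (1 + δ₁) * Ds ≤ (1 + s) * (B - 2 * d + E) := by
    have hDs0 : 0 ≤ Ds := by rw [hDs]; exact frobSq_nonneg' _
    calc (1 + δ₁) * Ds = (1 + s) * ((1 - δ₂) * Ds) := by rw [h_s_eq]; ring
      _ ≤ (1 + s) * (B - 2 * d + E) :=
        mul_le_mul_of_nonneg_left h5' (by linarith only [hs0])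
  -- adjoint norm bound : F ≤ c * B
  have H6 : F ≤ c * B := by
    have h1 : F = dotp b (A g) := by
      rw [hF, ← frobInner_self', hg]; exact hAdj b _
    have h2 : (dotp b (A g)) ^ 2 ≤ B * vecNormSq (A g) := by
      rw [hB]; exact dotp_sq_le' b (A g)
    have h3 : vecNormSq (A g) ≤ c * F := by
      rw [hF]; exact hnorm g
    have h4 : F ^ 2 ≤ B * (c * F) := by
      calc F ^ 2 = (dotp b (A g)) ^ 2 := by rw [h1]
        _ ≤ B * vecNormSq (A g) := h2
        _ ≤ B * (c * F) := mul_le_mul_of_nonneg_left h3 HB0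
    nlinarith only [h4, HF0, HB0, hc0, mul_nonneg hc0 HB0]
  -- Cauchy-Schwarz leverage : -d ≤ B / C
  have H8 : d ^ 2 ≤ B * E := by
    rw [hd, hB, hE]; exact dotp_sq_le' b e
  have hdC : -d ≤ B / C := by
    have p1 : C ^ 2 * d ^ 2 ≤ C ^ 2 * (B * E) := mul_le_mul_of_nonneg_left H8 (sq_nonneg C)
    have p2 : B * (C ^ 2 * E) ≤ B * B := mul_le_mul_of_nonneg_left H9.le HB0
    have p3 : (C * d) ^ 2 ≤ B ^ 2 := by nlinarith only [p1, p2]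
    rw [le_div_iff₀ hC]
    nlinarith only [p3, hBpos, sq_nonneg (B + C * d)]
  -- assemble
  have step6 : ε * (F / (1 + δ₁)) ≤ ε * ((c * B) / (1 + δ₁)) :=
    mul_le_mul_of_nonneg_left ((div_le_div_iff_of_pos_right h1δ).mpr H6) hε
  have step5 : (1 + ε) * ((1 + δ₁) * Ds - 2 * Is) ≤
      (1 + ε) * ((1 + s) * (B - 2 * d + E) - 2 * B + 2 * d) := by
    apply mul_le_mul_of_nonneg_left _ hε1
    rw [hIsBd]; linarith only [HK]
  have final1 : dataErr A y Xt ≤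
      B + (1 + ε) * ((1 + s) * (B - 2 * d + E) - 2 * B + 2 * d)
        + ε * ((c * B) / (1 + δ₁)) := by
    linarith only [H1', step2, step3, step5, step6]
  have final2 : (1 + s) * (B - 2 * d + E) - 2 * B + 2 * d ≤
      -B + s * (1 + 2 / C) * B + (1 + s) * E := by
    have hmul := mul_le_mul_of_nonneg_left hdC hs0
    have hident : s * (1 + 2 / C) * B = s * B + 2 * (s * (B / C)) := by ring
    linarith only [hmul, hident]
  have final3 : (1 + ε) * ((1 + s) * (B - 2 * d + E) - 2 * B + 2 * d) ≤
      (1 + ε) * (-B + s * (1 + 2 / C) * B + (1 + s) * E) :=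
    mul_le_mul_of_nonneg_left final2 hε1
  have hεB : 0 ≤ ε * B := mul_nonneg hε HB0
  rw [hfXiB]
  have hident2 : ε / (1 + δ₁) * c * B = ε * ((c * B) / (1 + δ₁)) := by ring
  linarith only [final1, final3, hεB, hident2]
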